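/- arXiv:1712.04918 — 4 statements merged into one kernel-verified Lean document; each statement's English description precedes it below -/
import Mathlib

section
/- Let G be a finite simple graph on vertex set V, and let S ⊆ V be a set of vertices with S ≠ V such that every vertex not in S has at most one neighbor in S. Then there is no linked order of G whose first two vertices both belong to S. In particular, if a, b ∈ S, there is no linked order of G starting with a, b. -/
/-
At the first vertex `c` of a linked order outside `S`, every earlier vertex lies in `S`, and there
are at least two of them when the order starts with two vertices of `S`. The linking condition then
gives `c` two neighbours in `S`, which no vertex outside `S` has.
-/

/-- A linked order of a finite simple graph `G` is an enumeration of all vertices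
(as a duplicate-free list containing every vertex) such that the first two vertices
are adjacent and every vertex in position `i ≥ 3` (1-indexed; i.e., preceded by at
least two vertices) has at least two neighbors among the preceding vertices. -/
def IsLinkedOrder {V : Type*} [Fintype V] [DecidableEq V]
    (G : SimpleGraph V) [DecidableRel G.Adj] (l : List V) : Prop :=
  (∀ v : V, v ∈ l) ∧ l.Nodup ∧
  (∀ a b rest, l = a :: b :: rest → G.Adj a b) ∧
  (∀ pre c suf, l = pre ++ c :: suf → 2 ≤ pre.length →
    2 ≤ (pre.toFinset ∩ G.neighborFinset c).card)

theorem List.exists_eq_append_cons_of_exists_not {α : Type*} {p : α → Prop} {l : List α}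
    (h : ∃ x ∈ l, ¬ p x) :
    ∃ pre c suf, l = pre ++ c :: suf ∧ (∀ x ∈ pre, p x) ∧ ¬ p c := by
  induction l with
  | nil => simp at h
  | cons a l ih =>
    by_cases ha : p a
    · obtain ⟨x, hx, hpx⟩ := h
      have hxl : x ∈ l := by
        rcases List.mem_cons.1 hx with rfl | hxl
        · exact absurd ha hpx
        · exact hxl
      obtain ⟨pre, c, suf, rfl, hpre, hc⟩ := ih ⟨x, hxl, hpx⟩
      refine ⟨a :: pre, c, suf, rfl, ?_, hc⟩
      simpa only [List.forall_mem_cons] using ⟨ha, hpre⟩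
    · exact ⟨[], a, l, rfl, by simp, ha⟩

theorem IsLinkedOrder.two_le_card_neighborFinset_inter {V : Type*} [Fintype V] [DecidableEq V]
    {G : SimpleGraph V} [DecidableRel G.Adj] {l pre suf : List V} {c : V} {S : Finset V}
    (hl : IsLinkedOrder G l) (hsplit : l = pre ++ c :: suf) (hlen : 2 ≤ pre.length)
    (hpre : ∀ x ∈ pre, x ∈ S) :
    2 ≤ (G.neighborFinset c ∩ S).card := by
  have hsub : pre.toFinset ∩ G.neighborFinset c ⊆ G.neighborFinset c ∩ S := by
    intro x hx
    rw [Finset.mem_inter, List.mem_toFinset] at hx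
    exact Finset.mem_inter.2 ⟨hx.2, hpre x hx.1⟩
  exact (hl.2.2.2 pre c suf hsplit hlen).trans (Finset.card_le_card hsub)

/-- If `S ≠ V` and every vertex outside `S` has at most one neighbor in `S`,
then no linked order of `G` starts with two vertices of `S`. -/
theorem no_linked_order_starting_in_S {V : Type*} [Fintype V] [DecidableEq V]
    (G : SimpleGraph V) [DecidableRel G.Adj]
    (S : Finset V) (hS : S ≠ Finset.univ)
    (hdeg : ∀ v ∉ S, (G.neighborFinset v ∩ S).card ≤ 1) :
    ¬ ∃ (a b : V) (rest : List V),
        a ∈ S ∧ b ∈ S ∧ IsLinkedOrder G (a :: b :: rest) := by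
  rintro ⟨a, b, rest, haS, hbS, hl⟩
  obtain ⟨v, hvS⟩ : ∃ v, v ∉ S := by
    simpa only [ne_eq, Finset.eq_univ_iff_forall, not_forall] using hS
  have hv : v ∈ rest := by
    rcases List.mem_cons.1 (hl.1 v) with rfl | hv
    · exact absurd haS hvS
    rcases List.mem_cons.1 hv with rfl | hv
    · exact absurd hbS hvS
    · exact hv
  obtain ⟨pre, c, suf, rfl, hpre, hcS⟩ :=
    List.exists_eq_append_cons_of_exists_not (p := (· ∈ S)) ⟨v, hv, hvS⟩
  have hprefix : ∀ x ∈ a :: b :: pre, x ∈ S := by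
    simpa only [List.forall_mem_cons] using ⟨haS, hbS, hpre⟩
  have hc_two := hl.two_le_card_neighborFinset_inter (pre := a :: b :: pre) rfl
    (by simp) hprefix
  have hc_one := hdeg c hcS
  omega
end

section
/- Let G be a finite simple graph on vertex set V with |V| ≥ 2. Then G admits a linked order if and only if there exist two adjacent vertices a and b such that, for every set S of vertices with {a, b} ⊆ S and S ≠ V, there exists a vertex c ∉ S having at least two neighbors in S. -/
/-!
If `(c₁, c₂, …)` is a linked order and `S ⊇ {c₁, c₂}` is a proper vertex set, the first vertex of
the order outside `S` is preceded only by vertices of `S`, at least two of which are its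
neighbours. Conversely, starting from `[a, b]` the condition lets one append a new vertex with two
neighbours among those already listed until every vertex is listed.
-/

section

variable {V : Type*} [Fintype V] [DecidableEq V] {G : SimpleGraph V} [DecidableRel G.Adj]

/-- A linked order of the subgraph induced on the vertices of `l`. -/
def IsLinkedSeq (G : SimpleGraph V) [DecidableRel G.Adj] (l : List V) : Prop :=
  l.Nodup ∧ (∀ a b rest, l = a :: b :: rest → G.Adj a b) ∧
  (∀ pre c suf, l = pre ++ c :: suf → 2 ≤ pre.length →
    2 ≤ (pre.toFinset ∩ G.neighborFinset c).card)

theorem isLinkedSeq_pair {a b : V} (hab : G.Adj a b) : IsLinkedSeq G [a, b] := by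
  refine ⟨by simp [hab.ne], fun a' b' rest h ↦ ?_, fun pre c suf h hpre ↦ ?_⟩
  · simp only [List.cons.injEq] at h
    obtain ⟨rfl, rfl, -⟩ := h
    exact hab
  · have := congrArg List.length h
    simp only [List.length_cons, List.length_nil, List.length_append] at this
    omega

theorem IsLinkedSeq.append_singleton {a b c : V} {rest : List V}
    (h : IsLinkedSeq G (a :: b :: rest)) (hc : c ∉ a :: b :: rest)
    (hc₂ : 2 ≤ ((a :: b :: rest).toFinset ∩ G.neighborFinset c).card) :
    IsLinkedSeq G (a :: b :: rest ++ [c]) := by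
  obtain ⟨hnd, hadj, hlinked⟩ := h
  refine ⟨by simpa using hnd.concat hc, fun a' b' rest' h ↦ ?_, fun pre c' suf h hpre ↦ ?_⟩
  · simp only [List.cons_append, List.cons.injEq] at h
    obtain ⟨rfl, rfl, -⟩ := h
    exact hadj a b rest rfl
  · rcases suf.eq_nil_or_concat with rfl | ⟨suf, d, rfl⟩
    · obtain ⟨rfl, hc'⟩ := List.append_inj' h.symm rfl
      obtain rfl : c' = c := List.singleton_inj.mp hc'
      exact hc₂
    · rw [List.concat_eq_append, ← List.cons_append, ← List.append_assoc] at h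
      exact hlinked pre c' suf (List.append_inj' h rfl).1 hpre

theorem IsLinkedSeq.isLinkedOrder {l : List V} (h : IsLinkedSeq G l)
    (hl : l.length = Fintype.card V) : IsLinkedOrder G l := by
  have huniv : l.toFinset = Finset.univ :=
    (Finset.card_eq_iff_eq_univ _).mp (by rw [List.toFinset_card_of_nodup h.1, hl])
  exact ⟨fun v ↦ List.mem_toFinset.mp (huniv ▸ Finset.mem_univ v), h⟩

theorem exists_isLinkedSeq_of_forall_exists_two_neighbors {a b : V} (hab : G.Adj a b)
    (hS : ∀ S : Finset V, a ∈ S → b ∈ S → S ≠ Finset.univ →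
      ∃ c ∉ S, 2 ≤ (G.neighborFinset c ∩ S).card) (k : ℕ) (hk : k + 2 ≤ Fintype.card V) :
    ∃ rest, IsLinkedSeq G (a :: b :: rest) ∧ rest.length = k := by
  induction k with
  | zero => exact ⟨[], isLinkedSeq_pair hab, rfl⟩
  | succ k ih =>
    obtain ⟨rest, hseq, hlen⟩ := ih (by omega)
    have hne : (a :: b :: rest).toFinset ≠ Finset.univ := by
      refine (Finset.card_lt_iff_ne_univ _).mp ?_
      rw [List.toFinset_card_of_nodup hseq.1, List.length_cons, List.length_cons]
      omega
    obtain ⟨c, hc, hc₂⟩ := hS _ (by simp) (by simp) hne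
    refine ⟨rest ++ [c], hseq.append_singleton (by simpa using hc) ?_, by simp [hlen]⟩
    rwa [Finset.inter_comm]

theorem IsLinkedOrder.exists_eq_cons_cons {l : List V} (h : IsLinkedOrder G l)
    (hV : 2 ≤ Fintype.card V) : ∃ a b rest, l = a :: b :: rest := by
  have hlen : l.length = Fintype.card V := by
    rw [← List.toFinset_card_of_nodup h.2.1, Finset.card_eq_iff_eq_univ]
    exact Finset.eq_univ_of_forall fun v ↦ List.mem_toFinset.mpr (h.1 v)
  rcases l with _ | ⟨a, _ | ⟨b, rest⟩⟩
  · simp only [List.length_nil] at hlen; omega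
  · simp only [List.length_cons, List.length_nil] at hlen; omega
  · exact ⟨a, b, rest, rfl⟩

theorem IsLinkedOrder.exists_two_neighbors_of_ne_univ {a b : V} {rest : List V}
    (h : IsLinkedOrder G (a :: b :: rest)) {S : Finset V} (ha : a ∈ S) (hb : b ∈ S)
    (hS : S ≠ Finset.univ) : ∃ c ∉ S, 2 ≤ (G.neighborFinset c ∩ S).card := by
  obtain ⟨v, hv⟩ := not_forall.mp (mt Finset.eq_univ_iff_forall.mpr hS)
  obtain ⟨c, hc⟩ : ∃ c, (a :: b :: rest).find? (· ∉ S) = some c :=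
    Option.isSome_iff_exists.mp (List.find?_isSome.mpr ⟨v, h.1 v, by simpa using hv⟩)
  obtain ⟨hcS, pre, suf, hsplit, hpre⟩ := List.find?_eq_some_iff_append.mp hc
  simp only [decide_not, Bool.not_eq_true', decide_eq_false_iff_not, Bool.not_not,
    decide_eq_true_eq] at hcS hpre
  have hlen : 2 ≤ pre.length := by
    rcases pre with _ | ⟨x, _ | ⟨y, pre⟩⟩
    · simp only [List.nil_append, List.cons.injEq] at hsplit
      exact absurd (hsplit.1 ▸ ha) hcS
    · simp only [List.cons_append, List.nil_append, List.cons.injEq] at hsplit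
      exact absurd (hsplit.2.1 ▸ hb) hcS
    · simp
  refine ⟨c, hcS, (h.2.2.2 pre c suf hsplit hlen).trans (Finset.card_le_card ?_)⟩
  rw [Finset.inter_comm]
  exact Finset.inter_subset_inter_left fun x hx ↦ hpre x (List.mem_toFinset.mp hx)

end

/-- `G` admits a linked order iff there are two adjacent vertices `a, b` such that
every vertex set `S` with `{a,b} ⊆ S ≠ V` admits a vertex outside `S` with at least
two neighbors in `S`. -/
theorem linked_order_iff {V : Type*} [Fintype V] [DecidableEq V]
    (G : SimpleGraph V) [DecidableRel G.Adj] (hm : 2 ≤ Fintype.card V) :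
    (∃ l : List V, IsLinkedOrder G l) ↔
      (∃ a b : V, G.Adj a b ∧ ∀ S : Finset V, a ∈ S → b ∈ S → S ≠ Finset.univ →
        ∃ c ∉ S, 2 ≤ (G.neighborFinset c ∩ S).card) := by
  constructor
  · rintro ⟨l, hl⟩
    obtain ⟨a, b, rest, rfl⟩ := hl.exists_eq_cons_cons hm
    exact ⟨a, b, hl.2.2.1 a b rest rfl,
      fun S ha hb hS ↦ hl.exists_two_neighbors_of_ne_univ ha hb hS⟩
  · rintro ⟨a, b, hab, hS⟩
    obtain ⟨rest, hseq, hlen⟩ :=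
      exists_isLinkedSeq_of_forall_exists_two_neighbors hab hS (Fintype.card V - 2) (by omega)
    refine ⟨_, hseq.isLinkedOrder ?_⟩
    rw [List.length_cons, List.length_cons, hlen]
    omega
end

section
/- Let G be a finite simple graph on vertex set V, and let a, b be adjacent vertices such that G admits a linked order whose first two vertices are a and b. Then the greedy procedure starting from {a, b} never gets stuck: for every set S of vertices obtained from {a, b} by repeatedly adding a vertex having at least two neighbors in the current set (i.e., there is a chain {a, b} = S_2 ⊂ S_3 ⊂ ⋯ ⊂ S_k = S with each S_i = S_{i-1} ∪ {c_i} for some c_i ∉ S_{i-1} having at least two neighbors in S_{i-1}), if S ≠ V then there exists a vertex c ∉ S having at least two neighbors in S. -/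
/-- `GreedyReach G a b S` holds iff `S` can be obtained from `{a, b}` by repeatedly
adding a vertex outside the current set having at least two neighbors in it, i.e.,
there is a chain `{a, b} = S₂ ⊂ S₃ ⊂ ⋯ ⊂ S_k = S` with each step adding one such vertex. -/
inductive GreedyReach {V : Type*} [Fintype V] [DecidableEq V]
    (G : SimpleGraph V) [DecidableRel G.Adj] (a b : V) : Finset V → Prop
  | base : GreedyReach G a b {a, b}
  | step (S : Finset V) (c : V) (hc : c ∉ S)
      (h2 : 2 ≤ (G.neighborFinset c ∩ S).card)
      (hS : GreedyReach G a b S) : GreedyReach G a b (insert c S)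

lemma greedy_mem_ab {V : Type*} [Fintype V] [DecidableEq V]
    (G : SimpleGraph V) [DecidableRel G.Adj]
    (a b : V) (S : Finset V) (hS : GreedyReach G a b S) : a ∈ S ∧ b ∈ S := by
  induction hS with
  | base => simp
  | step S c hc h2 hS ih => exact ⟨Finset.mem_insert_of_mem ih.1, Finset.mem_insert_of_mem ih.2⟩

lemma first_not_mem {V : Type*} [DecidableEq V] (S : Finset V) :
    ∀ l : List V, (∀ x ∈ l, x ∈ S) ∨
      ∃ pre c suf, l = pre ++ c :: suf ∧ (∀ x ∈ pre, x ∈ S) ∧ c ∉ S := by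
  intro l
  induction l with
  | nil => left; simp
  | cons hd tl ih =>
    by_cases hhd : hd ∈ S
    · rcases ih with h | ⟨pre, c, suf, heq, hpre, hc⟩
      · left; intro x hx; rcases List.mem_cons.mp hx with rfl | hx
        exacts [hhd, h x hx]
      · right
        exact ⟨hd :: pre, c, suf, by simp [heq], by
          intro x hx; rcases List.mem_cons.mp hx with rfl | hx
          exacts [hhd, hpre x hx], hc⟩
    · right; exact ⟨[], hd, tl, rfl, by simp, hhd⟩

/-- If `G` has a linked order starting with the adjacent vertices `a, b`, then the
greedy procedure started at `{a, b}` never gets stuck: any greedily reachable set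
`S ≠ V` still has a vertex outside it with at least two neighbors in it. -/
theorem greedy_never_stuck {V : Type*} [Fintype V] [DecidableEq V]
    (G : SimpleGraph V) [DecidableRel G.Adj]
    (a b : V) (hab : G.Adj a b)
    (hlin : ∃ rest : List V, IsLinkedOrder G (a :: b :: rest))
    (S : Finset V) (hS : GreedyReach G a b S) (hne : S ≠ Finset.univ) :
    ∃ c ∉ S, 2 ≤ (G.neighborFinset c ∩ S).card := by
  obtain ⟨rest, hall, hnd, hadj, hdeg⟩ := hlin
  obtain ⟨ha, hb⟩ := greedy_mem_ab G a b S hS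
  rcases first_not_mem S (a :: b :: rest) with h | ⟨pre, c, suf, heq, hpre, hc⟩
  · exact absurd (Finset.eq_univ_iff_forall.mpr fun v => h v (hall v)) hne
  · refine ⟨c, hc, ?_⟩
    have hlen : 2 ≤ pre.length := by
      match pre, heq with
      | [], heq => exact absurd (by injection heq with h1 _; exact h1 ▸ ha) hc
      | [x], heq =>
        injection heq with h1 h2
        injection h2 with h2 _
        exact absurd (h2 ▸ hb) hc
      | x :: y :: l, _ => simp
    have := hdeg pre c suf heq hlen
    calc 2 ≤ (pre.toFinset ∩ G.neighborFinset c).card := this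
      _ ≤ (G.neighborFinset c ∩ S).card := by
          apply Finset.card_le_card
          intro x hx
          rw [Finset.mem_inter] at hx ⊢
          exact ⟨hx.2, hpre x (List.mem_toFinset.mp hx.1)⟩
end

section
/- Let E = (C, V) be an election with |C| ≥ 2, and let G be the simple graph on vertex set C in which two candidates are joined by an edge exactly when they are connected in E. Then E is linked if and only if there exist two candidates a, b ∈ C that are connected in E such that, for every set S ⊆ C with {a, b} ⊆ S and S ≠ C, there exists a candidate c ∈ C \ S that is connected in E to at least two candidates in S. -/
/-- Two candidates `a, b` are connected in the election with vote multiset `votes`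
(each vote a linear order over the candidates, modeled as a ranking list) if some
vote ranks `a` first and `b` second and some vote ranks `b` first and `a` second. -/
def ElecConnected {C : Type*} (votes : Multiset (List C)) (a b : C) : Prop :=
  (∃ v ∈ votes, ∃ rest, v = a :: b :: rest) ∧
  (∃ v ∈ votes, ∃ rest, v = b :: a :: rest)

/-- The election is linked: there is an enumeration `(c₁, …, c_m)` of all candidates
such that `c₁` and `c₂` are connected, and every `c_i` with `i ≥ 3` is connected to at
least two candidates in `{c₁, …, c_{i-1}}`. -/
def IsLinkedElection {C : Type*} [Fintype C] (votes : Multiset (List C)) : Prop :=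
  ∃ l : List C, (∀ c : C, c ∈ l) ∧ l.Nodup ∧
    (∀ a b rest, l = a :: b :: rest → ElecConnected votes a b) ∧
    (∀ pre c suf, l = pre ++ c :: suf → 2 ≤ pre.length →
      ∃ x ∈ pre, ∃ y ∈ pre, x ≠ y ∧
        ElecConnected votes c x ∧ ElecConnected votes c y)

/-!
Forwards: in a linked enumeration, the candidates before the first one outside `S` all lie in `S`
and include the first two, so that candidate is connected to two members of `S`. Backwards: start
from `[a, b]` and repeatedly append the candidate that the hypothesis provides for the set of
candidates enumerated so far; as the list has no duplicates, it eventually contains everyone.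
The hypothesis also forces `a ≠ b`: for `a = b` it fails at `S = {a}`.
-/

section

variable {C : Type*}

def IsLinkedList (r : C → C → Prop) (l : List C) : Prop :=
  l.Nodup ∧
  (∀ a b rest, l = a :: b :: rest → r a b) ∧
  (∀ pre c suf, l = pre ++ c :: suf → 2 ≤ pre.length →
    ∃ x ∈ pre, ∃ y ∈ pre, x ≠ y ∧ r c x ∧ r c y)

theorem isLinkedElection_iff [Fintype C] (votes : Multiset (List C)) :
    IsLinkedElection votes ↔
      ∃ l : List C, (∀ c, c ∈ l) ∧ IsLinkedList (ElecConnected votes) l :=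
  Iff.rfl

namespace IsLinkedList

variable {r : C → C → Prop}

theorem pair {a b : C} (hab : r a b) (hne : a ≠ b) : IsLinkedList r [a, b] := by
  refine ⟨by simp [hne], ?_, ?_⟩
  · rintro a' b' rest ⟨⟩
    exact hab
  · intro pre c suf h hpre
    have := congrArg List.length h
    simp only [List.length_append, List.length_cons, List.length_nil] at this hpre
    omega

theorem append_singleton {l : List C} (hl : IsLinkedList r l) {c x y : C} (hc : c ∉ l)
    (hx : x ∈ l) (hy : y ∈ l) (hxy : x ≠ y) (hcx : r c x) (hcy : r c y) :
    IsLinkedList r (l ++ [c]) := by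
  obtain ⟨hnd, hhead, hrest⟩ := hl
  refine ⟨hnd.append (List.nodup_singleton c) (by simpa using hc), ?_, ?_⟩
  · intro a b rest h
    match l, hx, hy with
    | [_], hx, hy =>
      rw [List.mem_singleton] at hx hy
      exact absurd (hx.trans hy.symm) hxy
    | a' :: b' :: t, _, _ =>
      obtain ⟨rfl, rfl, -⟩ := List.cons_eq_cons.mp h
      exact hhead _ _ t rfl
  · intro pre d suf h hpre
    rcases suf.eq_nil_or_concat with rfl | ⟨s, z, rfl⟩
    · obtain ⟨rfl, hcd⟩ := List.append_inj' h (by simp)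
      obtain ⟨rfl, -⟩ := List.cons_eq_cons.mp hcd
      exact ⟨x, hx, y, hy, hxy, hcx, hcy⟩
    · rw [List.concat_eq_append, ← List.cons_append, ← List.append_assoc] at h
      exact hrest pre d s (List.append_inj' h (by simp)).1 hpre

theorem exists_rel_two_of_notMem [DecidableEq C] {a b : C} {t : List C}
    (hl : IsLinkedList r (a :: b :: t)) {S : Finset C} (ha : a ∈ S) (hb : b ∈ S)
    {z : C} (hz : z ∈ a :: b :: t) (hzS : z ∉ S) :
    ∃ c ∉ S, ∃ x ∈ S, ∃ y ∈ S, x ≠ y ∧ r c x ∧ r c y := by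
  obtain ⟨c, hc⟩ : ∃ c, (a :: b :: t).find? (fun x => x ∉ S) = some c :=
    Option.isSome_iff_exists.mp (List.find?_isSome.mpr ⟨z, hz, by simpa using hzS⟩)
  obtain ⟨hcS, pre, suf, hsplit, hpre⟩ := List.find?_eq_some_iff_append.mp hc
  have hpreS : ∀ x ∈ pre, x ∈ S := fun x hx => by simpa using hpre x hx
  have hlen : 2 ≤ pre.length := by
    match pre, hsplit with
    | [], h => simp only [List.nil_append, List.cons_eq_cons] at h; simp [← h.1, ha] at hcS
    | [_], h => simp only [List.cons_append, List.nil_append, List.cons_eq_cons] at h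
                simp [← h.2.1, hb] at hcS
    | _ :: _ :: _, _ => simp
  obtain ⟨x, hx, y, hy, hxy, hcx, hcy⟩ := hl.2.2 pre c suf hsplit hlen
  exact ⟨c, by simpa using hcS, x, hpreS x hx, y, hpreS y hy, hxy, hcx, hcy⟩

theorem exists_complete [Fintype C] {a b : C}
    (hS : ∀ S : Finset C, a ∈ S → b ∈ S → S ≠ Finset.univ →
      ∃ c ∉ S, ∃ x ∈ S, ∃ y ∈ S, x ≠ y ∧ r c x ∧ r c y)
    (l : List C) (hl : IsLinkedList r l) (ha : a ∈ l) (hb : b ∈ l) :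
    ∃ l' : List C, (∀ c, c ∈ l') ∧ IsLinkedList r l' := by
  classical
  by_cases huniv : l.toFinset = Finset.univ
  · exact ⟨l, fun c => List.mem_toFinset.mp (huniv ▸ Finset.mem_univ c), hl⟩
  obtain ⟨c, hc, x, hx, y, hy, hxy, hcx, hcy⟩ :=
    hS l.toFinset (List.mem_toFinset.mpr ha) (List.mem_toFinset.mpr hb) huniv
  have hl' := hl.append_singleton (by simpa using hc) (List.mem_toFinset.mp hx)
    (List.mem_toFinset.mp hy) hxy hcx hcy
  have hlen : (l ++ [c]).length ≤ Fintype.card C := hl'.1.length_le_card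
  exact exists_complete hS (l ++ [c]) hl' (by simp [ha]) (by simp [hb])
termination_by Fintype.card C - l.length
decreasing_by simp only [List.length_append, List.length_singleton] at hlen ⊢; omega

end IsLinkedList

end

theorem linked_election_iff_general {C : Type*} [Fintype C]
    (votes : Multiset (List C))
    (hC : 2 ≤ Fintype.card C) :
    IsLinkedElection votes ↔
      ∃ a b : C, ElecConnected votes a b ∧
        ∀ S : Finset C, a ∈ S → b ∈ S → S ≠ Finset.univ →
          ∃ c ∉ S, ∃ x ∈ S, ∃ y ∈ S, x ≠ y ∧
            ElecConnected votes c x ∧ ElecConnected votes c y := by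
  classical
  rw [isLinkedElection_iff]
  constructor
  · rintro ⟨l, hall, hl⟩
    have hlen : Fintype.card C ≤ l.length := by
      rw [← Finset.card_univ]
      exact (Finset.card_le_card fun c _ => List.mem_toFinset.mpr (hall c)).trans
        l.toFinset_card_le
    obtain ⟨a, b, t, rfl⟩ : ∃ a b t, l = a :: b :: t := by
      match l, hlen with
      | [], h | [_], h => simp at h; omega
      | a :: b :: t, _ => exact ⟨a, b, t, rfl⟩
    refine ⟨a, b, hl.2.1 a b t rfl, fun S ha hb hS => ?_⟩
    obtain ⟨z, hz⟩ := not_forall.mp (mt Finset.eq_univ_of_forall hS)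
    exact hl.exists_rel_two_of_notMem ha hb (hall z) hz
  · rintro ⟨a, b, hab, hS⟩
    have hne : a ≠ b := by
      rintro rfl
      have hsingle : ({a} : Finset C) ≠ Finset.univ := by
        rw [Ne, ← Finset.card_eq_iff_eq_univ, Finset.card_singleton]
        omega
      obtain ⟨-, -, x, hx, y, hy, hxy, -⟩ := hS {a} (by simp) (by simp) hsingle
      exact hxy ((Finset.mem_singleton.mp hx).trans (Finset.mem_singleton.mp hy).symm)
    exact IsLinkedList.exists_complete hS _ (.pair hab hne) (by simp) (by simp)

/-- An election with at least two candidates is linked iff there are two connected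
candidates `a, b` such that every candidate set `S` with `{a,b} ⊆ S ≠ C` has a
candidate outside `S` connected to at least two candidates in `S`. Here `G` is the
simple graph on the candidates whose edges are exactly the connected pairs. -/
theorem linked_election_iff {C : Type*} [Fintype C] [DecidableEq C]
    (votes : Multiset (List C))
    (hvotes : ∀ v ∈ votes, v.Nodup ∧ ∀ c : C, c ∈ v)
    (hC : 2 ≤ Fintype.card C)
    (G : SimpleGraph C) (hG : ∀ x y : C, G.Adj x y ↔ ElecConnected votes x y) :
    IsLinkedElection votes ↔
      ∃ a b : C, ElecConnected votes a b ∧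
        ∀ S : Finset C, a ∈ S → b ∈ S → S ≠ Finset.univ →
          ∃ c ∉ S, ∃ x ∈ S, ∃ y ∈ S, x ≠ y ∧
            ElecConnected votes c x ∧ ElecConnected votes c y :=
  linked_election_iff_general votes hC
end
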